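/- arXiv:2501.08823 — 3 statements merged into one kernel-verified Lean document; each statement's English description precedes it below -/
import Mathlib

section
/- For every n ∈ ℕ, the fractional-part condition {(n+1)φ} < 2 − φ holds if and only if there exists k ≥ 1 with n + 1 = ⌊kφ²⌋. -/
/-!
Since `(φ²)⁻¹ = 2 - φ`, the integers `k` with `⌊kφ²⌋ = m` are those in the interval
`[m(2 - φ), (m + 1)(2 - φ))`, which contains one exactly when `⌈m(2 - φ)⌉ - m(2 - φ) < 2 - φ`.
As `m(2 - φ) ≡ -mφ` modulo `1`, that gap is `{mφ}`.
-/

/-- The golden ratio `(1 + √5)/2`. -/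
noncomputable def phi : ℝ := (1 + Real.sqrt 5) / 2

open Real goldenRatio

theorem phi_eq_goldenRatio : phi = φ := rfl

theorem inv_goldenRatio_sq : (φ ^ 2)⁻¹ = 2 - φ := by
  rw [← inv_pow, inv_goldenRatio, ← one_sub_goldenRatio]
  linear_combination goldenRatio_sq

theorem ceil_mul_two_sub_goldenRatio (j : ℤ) :
    (⌈j * (2 - φ)⌉ : ℝ) = j * (2 - φ) + Int.fract (j * φ) := by
  have : j * (2 - φ) = -(j * φ) + ((2 * j : ℤ) : ℝ) := by push_cast; ring
  rw [this, Int.ceil_add_intCast, Int.ceil_neg, Int.fract]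
  push_cast
  ring

theorem exists_floor_mul_eq_iff_ceil_div_lt {r : ℝ} (hr : 0 < r) (j : ℤ) :
    (∃ k : ℤ, ⌊k * r⌋ = j) ↔ (⌈j / r⌉ : ℝ) < (j + 1) / r := by
  have floor_eq (k : ℤ) : ⌊k * r⌋ = j ↔ j / r ≤ k ∧ k < (j + 1) / r := by
    rw [Int.floor_eq_iff, div_le_iff₀ hr, lt_div_iff₀ hr]
  simp_rw [floor_eq]
  constructor
  · rintro ⟨k, hjk, hk⟩
    exact (Int.cast_le.2 (Int.ceil_le.2 hjk)).trans_lt hk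
  · exact fun h ↦ ⟨⌈j / r⌉, Int.le_ceil _, h⟩

theorem exists_natFloor_mul_eq_iff_exists_floor_mul_eq {r : ℝ} (hr : 0 ≤ r) {j : ℕ}
    (hj : 0 < j) : (∃ k : ℕ, 1 ≤ k ∧ j = ⌊k * r⌋₊) ↔ ∃ k : ℤ, ⌊k * r⌋ = j := by
  constructor
  · rintro ⟨k, -, rfl⟩
    exact ⟨k, by rw [Int.cast_natCast, Int.natCast_floor_eq_floor (by positivity)]⟩
  · rintro ⟨k, hk⟩
    have k_pos : 0 < k := by
      by_contra! hk0
      have : ⌊k * r⌋ ≤ 0 :=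
        Int.floor_nonpos (mul_nonpos_of_nonpos_of_nonneg (by exact_mod_cast hk0) hr)
      omega
    lift k to ℕ using k_pos.le
    refine ⟨k, by omega, ?_⟩
    rw [Int.cast_natCast, ← Int.natCast_floor_eq_floor (by positivity)] at hk
    exact_mod_cast hk.symm

theorem fract_condition_iff (n : ℕ) :
    Int.fract (((n : ℝ) + 1) * phi) < 2 - phi ↔
      ∃ k : ℕ, 1 ≤ k ∧ n + 1 = ⌊(k : ℝ) * phi ^ 2⌋₊ := by
  rw [phi_eq_goldenRatio,
    exists_natFloor_mul_eq_iff_exists_floor_mul_eq (by positivity) n.succ_pos,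
    exists_floor_mul_eq_iff_ceil_div_lt (pow_pos goldenRatio_pos 2), div_eq_mul_inv,
    div_eq_mul_inv, inv_goldenRatio_sq]
  have gap := ceil_mul_two_sub_goldenRatio (n + 1)
  push_cast at gap ⊢
  constructor <;> intro h <;> linarith
end

section
/- An integer m appears exactly twice in Sada's sequence (s(n))_{n≥1} if and only if there exists k ≥ 1 such that m = ⌊kφ²⌋; equivalently, there exist indices 1 ≤ i < j with s(i) = s(j) = m if and only if m = ⌊kφ²⌋ for some k ≥ 1. -/
/-- The Hurt-Sada array `A : ℕ → ℕ → ℕ`.  Row `0` is the identity sequence;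
row `n+1` is obtained from row `n` by moving the entry `n+1` (located at the unique
position `p` with `A n p = n+1`) by `n+1` places to the right, shifting the jumped-over
entries one place left. -/
noncomputable def A : ℕ → ℕ → ℕ
  | 0, k => k
  | n + 1, j =>
    let p := sInf {i | A n i = n + 1}
    if j < p then A n j
    else if j < p + (n + 1) then A n (j + 1)
    else if j = p + (n + 1) then n + 1
    else A n j

/-- `p n` is the (unique) position of `n` in row `n-1` of the Hurt-Sada array. -/
noncomputable def p (n : ℕ) : ℕ := sInf {i | A (n - 1) i = n}

/-- Sada's sequence: `s n` is the first element that `n` jumps over. -/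
noncomputable def s (n : ℕ) : ℕ := A (n - 1) (p n + 1)

/-!
Write `a k = ⌊kφ⌋` and `b k = a k + k = ⌊kφ²⌋` for the lower and upper Wythoff sequences, which
partition the positive integers. Row `n` of the Hurt–Sada array has a closed form: it is the
identity outside the window `(a n - n, a (n + 1))`, and inside it the entry at `x` is `j - 1`, where
`x + n + 2` is `a j` or `b j`. Checking this closed form against the recurrence is a case analysis
on the position relative to `p (n + 1)`, which turns out to be `#{j ≥ 1 | a j ≤ n + 1}`.

Reading off `s`: if `n + 1 = b k` then `s n = n + 1`, and if `n + 1 = a j` then `s n = j - 1`.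
The values of the second kind are pairwise distinct and every `m ≥ 1` is one of them
(`n = a (m + 1) - 1`), while the values of the first kind are distinct upper Wythoff numbers.
So `m` is taken twice exactly when it is an upper Wythoff number.
-/

open Real

lemma phi_sq : phi ^ 2 = phi + 1 := goldenRatio_sq

lemma one_lt_phi : 1 < phi := one_lt_goldenRatio

lemma phi_lt_two : phi < 2 := goldenRatio_lt_two

lemma irrational_phi : Irrational phi := goldenRatio_irrational

lemma three_halves_lt_phi : 3 / 2 < phi := by
  nlinarith [phi_sq, one_lt_phi]

lemma mul_phi_lt_iff {x y : ℝ} : x * phi < y ↔ x + y < y * phi := by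
  have h : y * phi - (x + y) = (y - x * phi) * (phi - 1) := by linear_combination x * phi_sq
  have := one_lt_phi
  constructor <;> intro hxy <;> nlinarith

lemma mul_phi_add_lt_iff {x y : ℝ} : x * phi + x < y ↔ x + y * phi < 2 * y := by
  have h : 2 * y - (x + y * phi) = (y - (x * phi + x)) * (2 - phi) := by
    linear_combination -x * phi_sq
  have := phi_lt_two
  constructor <;> intro hxy <;> nlinarith

namespace Wythoff

/-- The upper Wythoff sequence `⌊kφ²⌋` appears as `lower k + k` (`floor_mul_phi_sq`). -/
noncomputable def lower (k : ℕ) : ℕ := ⌊(k : ℝ) * phi⌋₊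

/-- The number of `j ≥ 1` with `lower j ≤ t`. -/
noncomputable def count (t : ℕ) : ℕ := lower (t + 1) - (t + 1)

lemma mul_phi_nonneg (k : ℕ) : 0 ≤ (k : ℝ) * phi := by
  have := one_lt_phi; positivity

lemma lower_lt_iff (k : ℕ) (z : ℤ) : (lower k : ℤ) < z ↔ (k : ℝ) * phi < z := by
  rw [lower, Int.natCast_floor_eq_floor (mul_phi_nonneg k), Int.floor_lt]

lemma le_lower_iff {k : ℕ} (hk : k ≠ 0) (z : ℤ) :
    z ≤ (lower k : ℤ) ↔ (z : ℝ) < k * phi := by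
  rw [lower, Int.natCast_floor_eq_floor (mul_phi_nonneg k), Int.le_floor, le_iff_lt_or_eq,
    or_iff_left ((irrational_phi.natCast_mul hk).ne_int z).symm]

@[simp] lemma lower_zero : lower 0 = 0 := by simp [lower]

lemma lower_le_mul (k : ℕ) : (lower k : ℝ) ≤ k * phi := Nat.floor_le (mul_phi_nonneg k)

lemma mul_lt_lower_add_one (k : ℕ) : (k : ℝ) * phi < lower k + 1 := Nat.lt_floor_add_one _

lemma self_le_lower (k : ℕ) : k ≤ lower k :=
  Nat.le_floor (by have := one_lt_phi; have := k.cast_nonneg (α := ℝ); nlinarith)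

lemma lower_lt_two_mul {k : ℕ} (hk : k ≠ 0) : lower k < 2 * k :=
  (Nat.floor_lt (mul_phi_nonneg k)).2 <| by
    have := phi_lt_two; have : (0 : ℝ) < k := by positivity
    push_cast; nlinarith

lemma lower_lt_lower_succ (k : ℕ) : lower k < lower (k + 1) :=
  Nat.le_floor (by have := lower_le_mul k; have := one_lt_phi; push_cast; linarith)

lemma lower_succ_le (k : ℕ) : lower (k + 1) ≤ lower k + 2 :=
  Nat.le_of_lt_succ <| (Nat.floor_lt (mul_phi_nonneg _)).2 <| by
    have := mul_lt_lower_add_one k; have := phi_lt_two; push_cast; linarith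

lemma lower_add_three_le (k : ℕ) : lower k + 3 ≤ lower (k + 2) :=
  Nat.le_floor (by have := lower_le_mul k; have := three_halves_lt_phi; push_cast; linarith)

lemma lower_strictMono : StrictMono lower := strictMono_nat_of_lt_succ lower_lt_lower_succ

theorem gc_lower : GaloisConnection lower count := fun j t ↦ by
  have key : (lower j : ℤ) < (t + 1 : ℕ) ↔ ((j + (t + 1) : ℕ) : ℤ) ≤ lower (t + 1) := by
    rw [lower_lt_iff, le_lower_iff t.succ_ne_zero]; push_cast; exact mul_phi_lt_iff
  have := self_le_lower (t + 1)
  simp only [count]; omega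

lemma upper_le_iff (j t : ℕ) : lower j + j ≤ t ↔ j ≤ t - count t := by
  have key :
      (lower j : ℤ) < ((t + 1 : ℕ) : ℤ) - j ↔ (lower (t + 1) : ℤ) < 2 * (t + 1 : ℕ) - j := by
    rw [lower_lt_iff, lower_lt_iff]; push_cast
    have := @mul_phi_add_lt_iff j (t + 1)
    constructor <;> intro h
    · linarith [this.1 (by linarith)]
    · linarith [this.2 (by linarith)]
  have := lower_lt_two_mul (k := t + 1) (by omega)
  simp only [count]; omega

theorem gc_upper : GaloisConnection (fun j ↦ lower j + j) (fun t ↦ t - count t) := upper_le_iff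

lemma count_add_eq_lower (t : ℕ) : count t + (t + 1) = lower (t + 1) :=
  Nat.sub_add_cancel (self_le_lower _)

lemma count_le (t : ℕ) : count t ≤ t := by
  have := lower_lt_two_mul (k := t + 1) (by omega)
  simp only [count]; omega

lemma count_succ_le (t : ℕ) : count (t + 1) ≤ count t + 1 := by
  have := lower_succ_le (t + 1)
  simp only [count]; omega

lemma count_lower (j : ℕ) : count (lower j) = j :=
  lower_strictMono.injective (gc_lower.l_u_l_eq_l j)

lemma upper_strictMono : StrictMono (fun k ↦ lower k + k) :=
  lower_strictMono.add strictMono_id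

lemma sub_count_upper (k : ℕ) : lower k + k - count (lower k + k) = k :=
  upper_strictMono.injective (gc_upper.l_u_l_eq_l k)

lemma count_succ_of_lower {t : ℕ} (h : lower (count (t + 1)) = t + 1) :
    count (t + 1) = count t + 1 := by
  have : ¬ count (t + 1) ≤ count t := fun hle ↦ by
    have := (gc_lower _ _).2 hle; omega
  have := count_succ_le t
  omega

lemma count_succ_of_not_lower {t : ℕ} (h : lower (count (t + 1)) ≠ t + 1) :
    count (t + 1) = count t := by
  have := gc_lower.l_u_le (t + 1)
  have := (gc_lower _ _).1 (show lower (count (t + 1)) ≤ t by omega)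
  have := gc_lower.monotone_u (show t ≤ t + 1 by omega)
  omega

/- `count t` and `t - count t` count the lower and the upper Wythoff numbers in `[1, t]`; they
are monotone, so at each `t ≥ 1` exactly one of them increases. -/
theorem upper_of_not_lower {t : ℕ} (ht : t ≠ 0) (h : lower (count t) ≠ t) :
    lower (t - count t) + (t - count t) = t := by
  obtain ⟨m, rfl⟩ : ∃ m, t = m + 1 := ⟨t - 1, by omega⟩
  have hc : count (m + 1) = count m := count_succ_of_not_lower h
  have := count_le m
  have hle := (upper_le_iff _ _).2 (le_refl (m + 1 - count (m + 1)))
  have hgt := mt (upper_le_iff _ m).1 (show ¬ m + 1 - count (m + 1) ≤ m - count m by omega)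
  omega

theorem lower_ne_upper (j : ℕ) {k : ℕ} (hk : k ≠ 0) : lower j ≠ lower k + k := by
  intro h
  have hc : count (lower j) = j := count_lower j
  have hu : lower j - count (lower j) = k := h ▸ sub_count_upper k
  have hc' := mt (gc_lower j (lower j - 1)).2 (by omega)
  have hu' := mt (upper_le_iff k (lower j - 1)).2 (by omega)
  omega

/-- For `t ≥ 1`, the `j` with `t = lower j` or `t = lower j + j`. -/
noncomputable def index (t : ℕ) : ℕ := if lower (count t) = t then count t else t - count t

lemma index_lower (j : ℕ) : index (lower j) = j := by simp [index, count_lower]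

lemma index_upper {k : ℕ} (hk : k ≠ 0) : index (lower k + k) = k := by
  rw [index, if_neg (lower_ne_upper _ hk), sub_count_upper]

lemma lower_lower_add_one {j : ℕ} (hj : j ≠ 0) : lower (lower j) + 1 = lower j + j := by
  obtain ⟨t, ht⟩ : ∃ t, lower j = t + 1 :=
    ⟨lower j - 1, by have := self_le_lower j; omega⟩
  have hcount := count_lower j
  rw [ht] at hcount ⊢
  have := count_succ_of_lower (t := t) (by rw [hcount, ← ht])
  have := count_add_eq_lower t
  omega

lemma lower_upper_add_one {k : ℕ} (hk : k ≠ 0) :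
    lower (lower k + k + 1) = lower (lower k + k) + 1 := by
  obtain ⟨t, ht⟩ : ∃ t, lower k + k = t + 1 := ⟨lower k + k - 1, by omega⟩
  have := count_succ_of_not_lower (t := t) (by rw [← ht]; exact lower_ne_upper _ hk)
  have := count_add_eq_lower t
  have := count_add_eq_lower (t + 1)
  rw [ht]; omega

lemma index_lower_add_one {m : ℕ} (hm : m ≠ 0) :
    index (lower m + 1) = if lower (count m) = m then count m else m + 1 := by
  split_ifs with h
  · have hc : count m ≠ 0 := fun hc ↦ hm (by rw [← h, hc, lower_zero])
    conv_lhs => rw [← h]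
    rw [lower_lower_add_one hc, index_upper hc]
  · have hu := upper_of_not_lower hm h
    have hk : m - count m ≠ 0 := fun hk ↦ hm (by rw [← hu, hk, lower_zero])
    conv_lhs => rw [← hu]
    rw [← lower_upper_add_one hk, hu, index_lower]

lemma index_of_upper_lt {k t : ℕ} (h1 : lower k + k < t) (h2 : t < lower (k + 1) + (k + 1)) :
    index t = t - k := by
  have hk : t - count t = k := by
    have := (upper_le_iff _ _).1 h1.le
    have := mt (upper_le_iff _ _).2 (not_le.2 h2)
    omega
  have hlower : lower (count t) = t := by
    by_contra h
    have := upper_of_not_lower (by omega) h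
    rw [hk] at this; omega
  have := count_le t
  rw [index, if_pos hlower]; omega

lemma index_lt_of_lt_lower {k t : ℕ} (h : t < lower k) : index t < k := by
  have hlt := mt (gc_lower _ _).2 (not_le.2 h)
  rw [index]
  split_ifs
  · omega
  · have := mt (upper_le_iff _ _).2 (show ¬ lower k + k ≤ t by omega)
    omega

lemma lower_one : lower 1 = 1 := by
  have := self_le_lower 1; have := lower_lt_two_mul (k := 1) one_ne_zero; omega

lemma lower_two : lower 2 = 3 := by
  have h1 : lower 0 + 3 ≤ lower 2 := lower_add_three_le 0
  have h2 : lower 2 ≤ lower 1 + 2 := lower_succ_le 1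
  rw [lower_zero, lower_one] at *; omega

lemma lower_three : lower 3 = 4 := by
  simpa [lower_one, lower_two] using lower_upper_add_one (k := 1) one_ne_zero

lemma count_one : count 1 = 1 := by simp [count, lower_two]

end Wythoff

open Wythoff

noncomputable def row (n x : ℕ) : ℕ :=
  if lower n - n < x ∧ x < lower (n + 1) then index (x + n + 2) - 1 else x

lemma row_eq_index {n x : ℕ} (h1 : lower n - n < x) (h2 : x < lower (n + 1)) :
    row n x = index (x + n + 2) - 1 :=
  if_pos ⟨h1, h2⟩

lemma row_eq_self {n x : ℕ} (h : x ≤ lower n - n ∨ lower (n + 1) ≤ x) : row n x = x :=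
  if_neg fun ⟨h1, h2⟩ ↦ by omega

lemma row_zero (x : ℕ) : row 0 x = x :=
  row_eq_self (by rw [lower_zero, zero_add, lower_one]; omega)

lemma row_count_succ (n : ℕ) : row n (count (n + 1)) = n + 1 := by
  obtain _ | n := n
  · rw [row_zero, count_one]
  show row (n + 1) (count (n + 2)) = n + 2
  have h0 : count n + (n + 1) = lower (n + 1) := count_add_eq_lower n
  have h2 : count (n + 2) + (n + 3) = lower (n + 3) := count_add_eq_lower (n + 2)
  have h13 : lower (n + 1) + 3 ≤ lower (n + 3) := lower_add_three_le (n + 1)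
  have h23 : lower (n + 3) ≤ lower (n + 2) + 2 := lower_succ_le (n + 2)
  have hwindow : count (n + 2) < lower (n + 2) := by omega
  rw [row_eq_index (by omega) hwindow, show count (n + 2) + (n + 1) + 2 = lower (n + 3) by omega,
    index_lower]
  rfl

lemma row_ne_of_lt_count_succ {n i : ℕ} (hi : i < count (n + 1)) : row n i ≠ n + 1 := by
  have h1 : count (n + 1) + (n + 2) = lower (n + 2) := count_add_eq_lower (n + 1)
  have h12 : lower (n + 2) ≤ lower (n + 1) + 2 := lower_succ_le (n + 1)
  unfold row
  split_ifs with h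
  · have := index_lt_of_lt_lower (show i + n + 2 < lower (n + 2) by omega)
    omega
  · obtain _ | n := n
    · rw [count_one] at hi; omega
    · have := lower_lt_two_mul (k := n + 1) (by omega)
      omega

lemma sInf_row_eq_count_succ (n : ℕ) : sInf {i | row n i = n + 1} = count (n + 1) :=
  le_antisymm (Nat.sInf_le (row_count_succ n)) <|
    le_csInf ⟨_, row_count_succ n⟩ fun _ hi ↦
      not_lt.1 fun hlt ↦ row_ne_of_lt_count_succ hlt hi

lemma row_count_succ_add_one (n : ℕ) :
    row n (count (n + 1) + 1) = if lower (count (n + 2)) = n + 2 then count (n + 1) else n + 2 := by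
  have hcount2 : count 2 = 1 := by simp [count, lower_three]
  obtain _ | n := n
  · rw [row_zero, count_one, if_neg (by rw [hcount2, lower_one]; omega)]
  show row (n + 1) (count (n + 2) + 1) =
    if lower (count (n + 3)) = n + 3 then count (n + 2) else n + 3
  have h2 : count (n + 2) + (n + 3) = lower (n + 3) := count_add_eq_lower (n + 2)
  have h13 : lower (n + 1) + 3 ≤ lower (n + 3) := lower_add_three_le (n + 1)
  have h23 : lower (n + 3) ≤ lower (n + 2) + 2 := lower_succ_le (n + 2)
  have hwindow : count (n + 2) + 1 < lower (n + 2) := by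
    obtain _ | n := n
    · rw [hcount2, lower_two]; omega
    · omega
  rw [row_eq_index (by omega) hwindow,
    show count (n + 2) + 1 + (n + 1) + 2 = lower (n + 3) + 1 by omega,
    index_lower_add_one (by omega)]
  split_ifs with h
  · have : count (n + 3) = count (n + 2) + 1 := count_succ_of_lower h
    omega
  · rfl

lemma row_succ_of_lt_count {n x : ℕ} (hx : x < count (n + 1)) : row (n + 1) x = row n x := by
  have h0 : count n + (n + 1) = lower (n + 1) := count_add_eq_lower n
  have h01 : count (n + 1) ≤ count n + 1 := count_succ_le n
  have hgap : lower (n + 1) ≤ lower n + 2 := lower_succ_le n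
  rw [row_eq_self (Or.inl (by omega))]
  by_cases hwindow : lower n - n < x ∧ x < lower (n + 1)
  · have hlower : lower (count (n + 1)) = n + 1 := by
      by_contra h
      have := count_succ_of_not_lower h
      omega
    rw [row_eq_index hwindow.1 hwindow.2, show x + n + 2 = lower (n + 1) + 1 by omega,
      index_lower_add_one (by omega : n + 1 ≠ 0), if_pos hlower]
    omega
  · exact (if_neg hwindow).symm

lemma row_succ_of_count_le {n x : ℕ} (h1 : count (n + 1) ≤ x)
    (h2 : x < count (n + 1) + (n + 1)) :
    row (n + 1) x = row n (x + 1) := by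
  have h0 : count n + (n + 1) = lower (n + 1) := count_add_eq_lower n
  have h1' : count (n + 1) + (n + 2) = lower (n + 2) := count_add_eq_lower (n + 1)
  have h2' : count (n + 2) + (n + 3) = lower (n + 3) := count_add_eq_lower (n + 2)
  have h01 : lower n < lower (n + 1) := lower_lt_lower_succ n
  have h13 : lower (n + 1) + 3 ≤ lower (n + 3) := lower_add_three_le (n + 1)
  have hx2 : x < lower (n + 2) := by omega
  by_cases hx : x ≤ count n
  · have hn1 : lower (count (n + 1)) ≠ n + 1 := fun h ↦ by have := count_succ_of_lower h; omega
    have hc1 : count (n + 1) = count n := count_succ_of_not_lower hn1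
    have hn2 : lower (count (n + 2)) = n + 2 := by
      by_contra h
      have : count (n + 2) = count (n + 1) := count_succ_of_not_lower h
      omega
    rw [row_eq_self (Or.inl (by omega)), show x + 1 = count (n + 1) + 1 by omega,
      row_count_succ_add_one, if_pos hn2]
    omega
  rw [row_eq_index (by omega) hx2]
  by_cases hx1 : x + 1 < lower (n + 1)
  · rw [row_eq_index (by omega) hx1]
    ring_nf
  · have hlt : x + (n + 1) + 2 < lower (n + 2) + (n + 2) := by omega
    rw [row_eq_self (Or.inr (by omega)), index_of_upper_lt (k := n + 1) (by omega) hlt]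
    omega

lemma row_succ_count_add (n : ℕ) : row (n + 1) (count (n + 1) + (n + 1)) = n + 1 := by
  have h1 : count (n + 1) + (n + 2) = lower (n + 2) := count_add_eq_lower (n + 1)
  have h12 : lower (n + 1) < lower (n + 2) := lower_lt_lower_succ (n + 1)
  have hx : count (n + 1) + (n + 1) < lower (n + 2) := by omega
  rw [row_eq_index (by omega) hx,
    show count (n + 1) + (n + 1) + (n + 1) + 2 = lower (n + 2) + (n + 2) by omega,
    index_upper (by omega)]
  rfl

lemma row_succ_of_count_add_lt {n x : ℕ} (hx : count (n + 1) + (n + 1) < x) :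
    row (n + 1) x = row n x := by
  have h1 : count (n + 1) + (n + 2) = lower (n + 2) := count_add_eq_lower (n + 1)
  have h12 : lower (n + 1) < lower (n + 2) := lower_lt_lower_succ (n + 1)
  have hx' : lower (n + 2) ≤ x := by omega
  rw [row_eq_self (Or.inr hx'), row_eq_self (Or.inr (by omega))]

lemma row_succ (n x : ℕ) : row (n + 1) x =
    if x < count (n + 1) then row n x
    else if x < count (n + 1) + (n + 1) then row n (x + 1)
    else if x = count (n + 1) + (n + 1) then n + 1
    else row n x := by
  split_ifs with h1 h2 h3
  · exact row_succ_of_lt_count h1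
  · exact row_succ_of_count_le (not_lt.1 h1) h2
  · rw [h3, row_succ_count_add]
  · exact row_succ_of_count_add_lt (by omega)

lemma A_succ (n j : ℕ) : A (n + 1) j =
    if j < p (n + 1) then A n j
    else if j < p (n + 1) + (n + 1) then A n (j + 1)
    else if j = p (n + 1) + (n + 1) then n + 1
    else A n j :=
  rfl

lemma p_succ_of_A_eq_row {n : ℕ} (h : A n = row n) : p (n + 1) = count (n + 1) := by
  simp only [p, Nat.add_sub_cancel, h, sInf_row_eq_count_succ]

theorem A_eq_row (n : ℕ) : A n = row n := by
  induction n with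
  | zero => exact funext fun x ↦ (row_zero x).symm
  | succ n ih =>
    funext x
    rw [A_succ, p_succ_of_A_eq_row ih, row_succ, ih]

theorem s_succ (n : ℕ) :
    s (n + 1) = if lower (count (n + 2)) = n + 2 then count (n + 1) else n + 2 := by
  rw [s, Nat.add_sub_cancel, p_succ_of_A_eq_row (A_eq_row n), A_eq_row, row_count_succ_add_one]

lemma exists_upper_of_not_lower {t : ℕ} (ht : t ≠ 0) (h : lower (count t) ≠ t) :
    ∃ k, 1 ≤ k ∧ t = lower k + k := by
  have hu := upper_of_not_lower ht h
  refine ⟨t - count t, Nat.one_le_iff_ne_zero.2 fun hk ↦ ht ?_, hu.symm⟩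
  rw [← hu, hk, lower_zero]

lemma s_succ_upper_or_lower (n : ℕ) :
    (∃ k, 1 ≤ k ∧ s (n + 1) = lower k + k) ∨ lower (s (n + 1) + 1) = n + 2 := by
  rw [s_succ]
  split_ifs with h
  · right
    rw [← count_succ_of_lower h]
    exact h
  · exact .inl (exists_upper_of_not_lower (by omega) h)

lemma s_upper_sub_one {k : ℕ} (hk : k ≠ 0) : s (lower k + k - 1) = lower k + k := by
  obtain ⟨n, hn⟩ : ∃ n, lower k + k = n + 2 :=
    ⟨lower k + k - 2, by have := self_le_lower k; omega⟩
  rw [hn, show n + 2 - 1 = n + 1 by omega, s_succ, if_neg (hn ▸ lower_ne_upper _ hk)]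

lemma s_lower_upper {k : ℕ} (hk : k ≠ 0) : s (lower (lower k + k)) = lower k + k := by
  obtain ⟨n, hn⟩ : ∃ n, lower (lower k + k) = n + 1 :=
    ⟨lower (lower k + k) - 1, by have := self_le_lower (lower k + k); omega⟩
  have hlower : lower (lower k + k + 1) = n + 2 := by rw [lower_upper_add_one hk, hn]
  rw [hn, s_succ, ← hlower, count_lower, if_pos rfl, ← hn, count_lower]

lemma floor_mul_phi_sq (k : ℕ) : ⌊(k : ℝ) * phi ^ 2⌋₊ = lower k + k := by
  rw [phi_sq, mul_add, mul_one]
  exact Nat.floor_add_natCast (mul_phi_nonneg k) k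

theorem sada_value_twice_iff (m : ℕ) :
    (∃ i j : ℕ, 1 ≤ i ∧ i < j ∧ s i = m ∧ s j = m) ↔
      ∃ k : ℕ, 1 ≤ k ∧ m = ⌊(k : ℝ) * phi ^ 2⌋₊ := by
  simp only [floor_mul_phi_sq]
  constructor
  · rintro ⟨i, j, hi, hij, rfl, hsj⟩
    obtain ⟨i, rfl⟩ : ∃ i', i = i' + 1 := ⟨i - 1, by omega⟩
    obtain ⟨j, rfl⟩ : ∃ j', j = j' + 1 := ⟨j - 1, by omega⟩
    rcases s_succ_upper_or_lower i with ⟨k, hk, hi⟩ | hi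
    · exact ⟨k, hk, hi⟩
    rcases s_succ_upper_or_lower j with ⟨k, hk, hj⟩ | hj
    · exact ⟨k, hk, hsj ▸ hj⟩
    rw [hsj] at hj
    omega
  · rintro ⟨k, hk, rfl⟩
    have := self_le_lower k
    have := self_le_lower (lower k + k)
    exact ⟨_, _, by omega, by omega, s_upper_sub_one (by omega), s_lower_upper (by omega)⟩
end

section
/- For every n ∈ ℕ, if the diagonal entry d(n) = A(n,n) of the Hurt-Sada array satisfies d(n) < n, then d(n) = ⌊(4 − 2φ)n + (5 − 3φ)⌋. -/
/-!
Value `k` of the Hurt-Sada array jumps from position `⌊(k+1)/φ⌋` of row `k - 1`, and this gives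
the position of every value in every row in closed form. Passing from one row to the next
reindexes by an explicit shift, and checking that the shift carries the closed form for row `n + 1`
to the one for row `n` reduces, case by case, to the Galois connection
`⌊(m+1)/φ⌋ ≤ k ↔ m ≤ k + ⌊(k+1)/φ⌋`, a consequence of `φ⁻¹ + φ⁻² = 1` and the irrationality of `φ`.
If `d(n) = k < n`, then `k` sits at position `n`, which by the closed form means
`⌊(k+1)/φ⌋ = 2(n - k)`; solving for `k` gives the floor formula.
-/

open Real
open scoped goldenRatio

noncomputable def jumpPos (k : ℕ) : ℕ := ⌊(k + 1 : ℝ) * φ⁻¹⌋₊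

lemma inv_goldenRatio_add_sq : φ⁻¹ + φ⁻¹ ^ 2 = 1 := by
  rw [inv_goldenRatio, ← one_sub_goldenConj]
  linear_combination goldenRatio_sq

lemma jumpPos_lt (k : ℕ) : (jumpPos k : ℝ) < (k + 1) * φ⁻¹ := by
  have hirr : Irrational ((k + 1 : ℝ) * φ⁻¹) := by
    exact_mod_cast goldenRatio_irrational.inv.natCast_mul k.succ_ne_zero
  exact (Nat.floor_le (by positivity)).lt_of_ne (hirr.ne_nat _).symm

lemma lt_jumpPos_add_one (k : ℕ) : (k + 1) * φ⁻¹ < (jumpPos k + 1 : ℝ) :=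
  Nat.lt_floor_add_one _

theorem jumpPos_le_iff {m k : ℕ} : jumpPos m ≤ k ↔ m ≤ k + jumpPos k := by
  have hc : 0 < φ⁻¹ := inv_pos.2 goldenRatio_pos
  have hlt := mul_lt_mul_of_pos_right (jumpPos_lt k) hc
  have hgt := mul_lt_mul_of_pos_right (lt_jumpPos_add_one k) hc
  -- both directions come down to `(x + x * φ⁻¹) * φ⁻¹ = x` for `x = k + 1`
  rw [← Nat.lt_succ_iff, jumpPos, Nat.floor_lt (by positivity)]
  simp only [Nat.cast_succ]
  constructor
  · intro h
    by_contra! hm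
    have hm : (k + jumpPos k + 1 : ℝ) ≤ m := by exact_mod_cast hm
    nlinarith [inv_goldenRatio_add_sq]
  · intro h
    have hm : (m : ℝ) ≤ k + jumpPos k := by exact_mod_cast h
    nlinarith [inv_goldenRatio_add_sq]

lemma jumpPos_mono : Monotone jumpPos :=
  GaloisConnection.monotone_l (u := fun k => k + jumpPos k) fun _ _ => jumpPos_le_iff

lemma jumpPos_le_self (k : ℕ) : jumpPos k ≤ k := jumpPos_le_iff.2 (Nat.le_add_right k _)

def shift (p m j : ℕ) : ℕ :=
  if j < p then j else if j < p + m then j + 1 else if j = p + m then p else j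

lemma shift_injective (p m : ℕ) : Function.Injective (shift p m) := by
  intro a b hab
  unfold shift at hab
  split_ifs at hab <;> omega

/-- Value `k` stays at position `k` until, in the rows just before its jump, it drifts left by one
per row down to `jumpPos k`; in row `k` it lands at `jumpPos k + k` and drifts left again by one per
row until it settles at `k`. -/
noncomputable def position (n k : ℕ) : ℕ :=
  if k ≤ n then max k (jumpPos k + 2 * k - n) else min k (jumpPos k + k - n - 1)

lemma position_zero (k : ℕ) : position 0 k = k := by
  have := jumpPos_le_iff (m := k) (k := 0)
  have := jumpPos_le_self 0
  unfold position
  split_ifs <;> omega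

lemma position_succ_self (n : ℕ) : position n (n + 1) = jumpPos (n + 1) := by
  have := jumpPos_le_self (n + 1)
  unfold position
  split_ifs <;> omega

lemma shift_position (n k : ℕ) :
    shift (jumpPos (n + 1)) (n + 1) (position (n + 1) k) = position n k := by
  -- these place `k` relative to the window `[jumpPos (n + 1), jumpPos (n + 1) + n + 1]` of this step
  have := jumpPos_le_iff (m := n + 1) (k := k)
  have := jumpPos_le_iff (m := k) (k := n + 1)
  have := jumpPos_le_iff (m := k) (k := n)
  have := jumpPos_mono (Nat.le_add_right n 1)
  have := jumpPos_le_self (n + 1)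
  have := @jumpPos_mono k (n + 1)
  have := @jumpPos_mono (n + 1) k
  unfold position shift
  split_ifs <;> omega

lemma A_succ_eq_comp {n p : ℕ} (hp : sInf {i | A n i = n + 1} = p) (hA : A n p = n + 1) :
    A (n + 1) = A n ∘ shift p (n + 1) := by
  funext j
  rw [A, hp, Function.comp_apply]
  unfold shift
  split_ifs <;> first | rfl | exact hA.symm

theorem A_injective_and_apply_position (n : ℕ) :
    Function.Injective (A n) ∧ ∀ k, A n (position n k) = k := by
  induction n with
  | zero => exact ⟨fun a b h => by simpa [A] using h, fun k => by simp [A, position_zero]⟩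
  | succ n ih =>
    obtain ⟨hinj, hpos⟩ := ih
    have hjump : A n (jumpPos (n + 1)) = n + 1 := position_succ_self n ▸ hpos (n + 1)
    have hp : sInf {i | A n i = n + 1} = jumpPos (n + 1) :=
      hinj ((Nat.sInf_mem (s := {i | A n i = n + 1}) ⟨_, hjump⟩).trans hjump.symm)
    rw [A_succ_eq_comp hp hjump]
    exact ⟨hinj.comp (shift_injective _ _), fun k => by simp [shift_position, hpos]⟩

lemma eq_floor_of_jumpPos_add_two_mul {n k : ℕ} (h : jumpPos k + 2 * k = 2 * n) :
    k = ⌊(4 - 2 * φ) * n + (5 - 3 * φ)⌋₊ := by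
  have hF : (jumpPos k : ℝ) = 2 * n - 2 * k := by
    rw [eq_sub_iff_add_eq]; exact_mod_cast h
  have hlo := jumpPos_lt k
  have hhi := lt_jumpPos_add_one k
  rw [hF, inv_goldenRatio, ← one_sub_goldenConj] at hlo hhi
  -- `2 - φ = φ⁻²`, so multiplying the bounds on `jumpPos k` by `2 - φ` isolates `k`
  have h2 : 0 < 2 - φ := sub_pos.2 goldenRatio_lt_two
  have hsq := goldenRatio_sq
  have hk : (k : ℝ) < (4 - 2 * φ) * n + (5 - 3 * φ) := by
    nlinarith [mul_lt_mul_of_pos_left hhi h2]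
  refine ((Nat.floor_eq_iff (hk.le.trans' k.cast_nonneg)).2 ⟨hk.le, ?_⟩).symm
  nlinarith [mul_lt_mul_of_pos_left hlo h2, one_lt_goldenRatio]

theorem diagonal_lt_formula (n : ℕ) (h : A n n < n) :
    A n n = ⌊(4 - 2 * phi) * (n : ℝ) + (5 - 3 * phi)⌋₊ := by
  obtain ⟨hinj, hpos⟩ := A_injective_and_apply_position n
  have hdiag : position n (A n n) = n := hinj (hpos _)
  apply eq_floor_of_jumpPos_add_two_mul
  rw [position, if_pos h.le] at hdiag
  omega
end
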